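/- arXiv:1107.5282 — 2 statements merged into one kernel-verified Lean document; each statement's English description precedes it below -/
import Mathlib

section
/- Let m, n, c be positive integers with gcd(m,c) = gcd(n,c). Then T(m,n;c) = gcd(m,c)·∏_{p ∣ c/gcd(m,c)} p/(p−1), the product being over the primes p dividing c/gcd(m,c). -/
open ArithmeticFunction

/-- Ramanujan's sum `c_q(n) = ∑_{d ∣ (q,n)} μ(q/d) d`. -/
def ramanujanSum (q n : ℕ) : ℤ :=
  ∑ d ∈ (Nat.gcd q n).divisors, (ArithmeticFunction.moebius (q / d) : ℤ) * (d : ℤ)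

/-- `T(m,n;c) = ∑_{u ∣ c} φ(u)⁻¹ c_u(m) c_u(n)`. -/
noncomputable def Tsum (m n c : ℕ) : ℝ :=
  ∑ u ∈ c.divisors, ((Nat.totient u : ℝ))⁻¹ * (ramanujanSum u m : ℝ) * (ramanujanSum u n : ℝ)

/-!
For `u ∣ c` the sum `c_u(m)` depends only on `gcd(u, m) = gcd(u, gcd(m, c))`, so with
`g = gcd(m, c) = gcd(n, c)` we get `T(m,n;c) = T(g,g;c) = ∑_{u ∣ c} c_u(g)² / φ(u)`.
Since `c_·(g)` is the Dirichlet convolution of `d ↦ d·[d ∣ g]` with `μ`, it is multiplicative,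
so both `T(g,g;·)` and the closed form are multiplicative in `c` and need only be compared at
prime powers `p^k`. There, with `v = v_p(g)`, `c_{p^j}(g)` is `φ(p^j)` for `j ≤ v`, `-p^v` for
`j = v + 1` and `0` beyond, and the partial sums of `c_{p^j}(g)² / φ(p^j)` are `p^k` for `k ≤ v`
and `p^v · p/(p-1)` afterwards.
-/

open Finset
open scoped ArithmeticFunction.Moebius ArithmeticFunction.zeta

theorem mul_moebius_apply_prime_pow_succ {R : Type*} [Ring R] (f : ArithmeticFunction R)
    {p : ℕ} (hp : p.Prime) (k : ℕ) :
    (f * μ) (p ^ (k + 1)) = f (p ^ (k + 1)) - f (p ^ k) := by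
  have inversion (n : ℕ) : (f * μ * ζ) n = f n := by
    rw [mul_assoc, coe_moebius_mul_coe_zeta, mul_one]
  rw [← inversion, ← inversion, coe_mul_zeta_apply, coe_mul_zeta_apply,
    Nat.sum_divisors_prime_pow hp, Nat.sum_divisors_prime_pow hp, sum_range_succ _ (k + 1),
    add_sub_cancel_left]

theorem Nat.gcd_prime_pow_eq_pow_min {p m : ℕ} (hp : p.Prime) (hm : m ≠ 0) (k : ℕ) :
    Nat.gcd m (p ^ k) = p ^ min (m.factorization p) k := by
  have hdvd_m {i : ℕ} : p ^ i ∣ m ↔ i ≤ m.factorization p := hp.pow_dvd_iff_le_factorization hm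
  obtain ⟨i, hik, hi⟩ := (Nat.dvd_prime_pow hp).1 (Nat.gcd_dvd_right m (p ^ k))
  refine Nat.dvd_antisymm ?_
    (Nat.dvd_gcd (hdvd_m.2 (min_le_left _ _)) (pow_dvd_pow p (min_le_right _ _)))
  rw [hi]
  exact pow_dvd_pow p (le_min (hdvd_m.1 (hi ▸ Nat.gcd_dvd_left m (p ^ k))) hik)

def idOnDivisors (m : ℕ) : ArithmeticFunction ℤ :=
  ⟨fun d => if d ∣ m then (d : ℤ) else 0, by simp⟩

theorem idOnDivisors_apply (m d : ℕ) : idOnDivisors m d = if d ∣ m then (d : ℤ) else 0 := rfl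

theorem isMultiplicative_idOnDivisors (m : ℕ) : (idOnDivisors m).IsMultiplicative := by
  refine ⟨by simp [idOnDivisors_apply], fun {x y} hxy => ?_⟩
  have hdvd : x * y ∣ m ↔ x ∣ m ∧ y ∣ m :=
    ⟨fun h => ⟨dvd_of_mul_right_dvd h, dvd_of_mul_left_dvd h⟩,
      fun h => hxy.mul_dvd_of_dvd_of_dvd h.1 h.2⟩
  simp only [idOnDivisors_apply, hdvd]
  split_ifs <;> simp_all

theorem ramanujanSum_eq_idOnDivisors_mul_moebius (q m : ℕ) :
    ramanujanSum q m = (idOnDivisors m * μ) q := by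
  rw [mul_apply, Nat.sum_divisorsAntidiagonal (fun a b => idOnDivisors m a * μ b), ramanujanSum]
  rcases eq_or_ne q 0 with rfl | hq
  · simp
  rw [← Nat.divisors_filter_dvd_of_dvd hq (Nat.gcd_dvd_left q m), sum_filter]
  refine sum_congr rfl fun d hd => ?_
  have hdq := Nat.dvd_of_mem_divisors hd
  simp only [idOnDivisors_apply, Nat.dvd_gcd_iff, hdq, true_and]
  split_ifs <;> simp [mul_comm]

theorem ramanujanSum_mul_of_coprime (m : ℕ) {x y : ℕ} (hxy : x.Coprime y) :
    ramanujanSum (x * y) m = ramanujanSum x m * ramanujanSum y m := by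
  simp only [ramanujanSum_eq_idOnDivisors_mul_moebius]
  exact ((isMultiplicative_idOnDivisors m).mul isMultiplicative_moebius).map_mul_of_coprime hxy

theorem ramanujanSum_prime_pow_succ {p : ℕ} (hp : p.Prime) (m k : ℕ) :
    ramanujanSum (p ^ (k + 1)) m = idOnDivisors m (p ^ (k + 1)) - idOnDivisors m (p ^ k) := by
  rw [ramanujanSum_eq_idOnDivisors_mul_moebius, ← mul_moebius_apply_prime_pow_succ _ hp, intCoe_int]

noncomputable def tsumTerm (m : ℕ) : ArithmeticFunction ℝ :=
  ⟨fun u => (u.totient : ℝ)⁻¹ * ramanujanSum u m * ramanujanSum u m, by simp⟩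

theorem tsumTerm_apply (m u : ℕ) :
    tsumTerm m u = (u.totient : ℝ)⁻¹ * ramanujanSum u m * ramanujanSum u m := rfl

theorem isMultiplicative_tsumTerm (m : ℕ) : (tsumTerm m).IsMultiplicative := by
  refine ⟨by simp [tsumTerm_apply, ramanujanSum], fun {x y} hxy => ?_⟩
  simp only [tsumTerm_apply, Nat.totient_mul hxy, ramanujanSum_mul_of_coprime m hxy]
  push_cast
  rw [mul_inv]
  ring

theorem Tsum_self_eq_zeta_mul_tsumTerm (m c : ℕ) : Tsum m m c = (ζ * tsumTerm m) c := by
  rw [coe_zeta_mul_apply, Tsum]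
  rfl

section PrimePower

variable {p m : ℕ}

theorem idOnDivisors_prime_pow (hp : p.Prime) (hm : m ≠ 0) (j : ℕ) :
    idOnDivisors m (p ^ j) = if j ≤ m.factorization p then (p : ℤ) ^ j else 0 := by
  simp [idOnDivisors_apply, hp.pow_dvd_iff_le_factorization hm]

theorem ramanujanSum_prime_pow_of_le {j : ℕ} (hp : p.Prime) (hm : m ≠ 0)
    (hj : j ≤ m.factorization p) : ramanujanSum (p ^ j) m = (p ^ j).totient := by
  rcases j with _ | k
  · simp [ramanujanSum]
  rw [ramanujanSum_prime_pow_succ hp, idOnDivisors_prime_pow hp hm, idOnDivisors_prime_pow hp hm,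
    if_pos hj, if_pos (by omega), Nat.totient_prime_pow_succ hp]
  push_cast [hp.one_le]
  ring

theorem ramanujanSum_prime_pow_factorization_succ (hp : p.Prime) (hm : m ≠ 0) :
    ramanujanSum (p ^ (m.factorization p + 1)) m = -(p : ℤ) ^ m.factorization p := by
  rw [ramanujanSum_prime_pow_succ hp, idOnDivisors_prime_pow hp hm, idOnDivisors_prime_pow hp hm,
    if_neg (by omega), if_pos le_rfl, zero_sub]

theorem ramanujanSum_prime_pow_of_lt {j : ℕ} (hp : p.Prime) (hm : m ≠ 0)
    (hj : m.factorization p + 1 < j) : ramanujanSum (p ^ j) m = 0 := by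
  obtain ⟨k, rfl⟩ : ∃ k, j = k + 1 := ⟨j - 1, by omega⟩
  rw [ramanujanSum_prime_pow_succ hp, idOnDivisors_prime_pow hp hm, idOnDivisors_prime_pow hp hm,
    if_neg (by omega), if_neg (by omega), sub_zero]

theorem tsumTerm_prime_pow_of_le (hp : p.Prime) (hm : m ≠ 0) {j : ℕ}
    (hj : j ≤ m.factorization p) : tsumTerm m (p ^ j) = (p ^ j).totient := by
  have hφ : ((p ^ j).totient : ℝ) ≠ 0 := by
    exact_mod_cast (Nat.totient_pos.2 (pow_pos hp.pos j)).ne'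
  rw [tsumTerm_apply, ramanujanSum_prime_pow_of_le hp hm hj, Int.cast_natCast, inv_mul_cancel₀ hφ,
    one_mul]

theorem tsumTerm_prime_pow_factorization_succ (hp : p.Prime) (hm : m ≠ 0) :
    tsumTerm m (p ^ (m.factorization p + 1)) = p ^ m.factorization p / (p - 1) := by
  have hp1 : (p : ℝ) - 1 ≠ 0 := sub_ne_zero.2 (by exact_mod_cast hp.one_lt.ne')
  have hp0 : (p : ℝ) ≠ 0 := by exact_mod_cast hp.ne_zero
  rw [tsumTerm_apply, ramanujanSum_prime_pow_factorization_succ hp hm,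
    Nat.totient_prime_pow_succ hp]
  push_cast [hp.one_le]
  field_simp

theorem tsumTerm_prime_pow_of_lt (hp : p.Prime) (hm : m ≠ 0) {j : ℕ}
    (hj : m.factorization p + 1 < j) : tsumTerm m (p ^ j) = 0 := by
  rw [tsumTerm_apply, ramanujanSum_prime_pow_of_lt hp hm hj, Int.cast_zero, mul_zero]

theorem sum_range_tsumTerm_prime_pow (hp : p.Prime) (hm : m ≠ 0) (k : ℕ) :
    ∑ j ∈ range (k + 1), tsumTerm m (p ^ j) =
      if k ≤ m.factorization p then (p : ℝ) ^ k
      else p ^ m.factorization p * (p / (p - 1)) := by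
  induction k with
  | zero => simp [tsumTerm_apply, ramanujanSum]
  | succ k ih =>
    rw [sum_range_succ, ih]
    rcases lt_trichotomy k (m.factorization p) with hk | rfl | hk
    · rw [if_pos hk.le, if_pos hk.nat_succ_le, tsumTerm_prime_pow_of_le hp hm hk,
        Nat.totient_prime_pow_succ hp]
      push_cast [hp.one_le]
      ring
    · have hp1 : (p : ℝ) - 1 ≠ 0 := sub_ne_zero.2 (by exact_mod_cast hp.one_lt.ne')
      rw [if_pos le_rfl, if_neg (by omega), tsumTerm_prime_pow_factorization_succ hp hm]
      field_simp
      ring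
    · rw [if_neg (by omega), if_neg (by omega), tsumTerm_prime_pow_of_lt hp hm (by omega), add_zero]

end PrimePower

noncomputable def tsumClosedForm (m : ℕ) : ArithmeticFunction ℝ :=
  ⟨fun c => if c = 0 then 0 else
    (Nat.gcd m c : ℝ) * ∏ p ∈ (c / Nat.gcd m c).primeFactors, (p : ℝ) / (p - 1), by simp⟩

theorem tsumClosedForm_apply (m : ℕ) {c : ℕ} (hc : c ≠ 0) :
    tsumClosedForm m c =
      (Nat.gcd m c : ℝ) * ∏ p ∈ (c / Nat.gcd m c).primeFactors, (p : ℝ) / (p - 1) :=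
  if_neg hc

theorem isMultiplicative_tsumClosedForm (m : ℕ) : (tsumClosedForm m).IsMultiplicative := by
  refine IsMultiplicative.iff_ne_zero.2 ⟨by simp [tsumClosedForm_apply], fun {x y} hx hy hxy => ?_⟩
  have hgx := Nat.gcd_dvd_right m x
  have hgy := Nat.gcd_dvd_right m y
  have hx' : x / Nat.gcd m x ≠ 0 :=
    (Nat.div_ne_zero_iff_of_dvd hgx).2 ⟨hx, Nat.gcd_ne_zero_right hx⟩
  have hy' : y / Nat.gcd m y ≠ 0 :=
    (Nat.div_ne_zero_iff_of_dvd hgy).2 ⟨hy, Nat.gcd_ne_zero_right hy⟩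
  have hcop : (x / Nat.gcd m x).Coprime (y / Nat.gcd m y) :=
    (hxy.coprime_div_left hgx).coprime_div_right hgy
  rw [tsumClosedForm_apply m (mul_ne_zero hx hy), tsumClosedForm_apply m hx,
    tsumClosedForm_apply m hy, Nat.Coprime.gcd_mul m hxy, ← Nat.div_mul_div_comm hgx hgy,
    Nat.primeFactors_mul hx' hy', prod_union hcop.disjoint_primeFactors]
  push_cast
  ring

theorem tsumClosedForm_prime_pow {p m : ℕ} (hp : p.Prime) (hm : m ≠ 0) (k : ℕ) :
    tsumClosedForm m (p ^ k) =
      if k ≤ m.factorization p then (p : ℝ) ^ k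
      else p ^ m.factorization p * (p / (p - 1)) := by
  rw [tsumClosedForm_apply m (pow_ne_zero k hp.ne_zero), Nat.gcd_prime_pow_eq_pow_min hp hm]
  split_ifs with hk
  · rw [min_eq_right hk, Nat.div_self (pow_pos hp.pos k), Nat.primeFactors_one, prod_empty,
      mul_one, Nat.cast_pow]
  · rw [min_eq_left (by omega), Nat.pow_div (by omega) hp.pos,
      Nat.primeFactors_prime_pow (by omega) hp, prod_singleton, Nat.cast_pow]

theorem zeta_mul_tsumTerm_eq_tsumClosedForm {m : ℕ} (hm : m ≠ 0) :
    (ζ * tsumTerm m : ArithmeticFunction ℝ) = tsumClosedForm m := by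
  refine (IsMultiplicative.eq_iff_eq_on_prime_powers _
    (isMultiplicative_zeta.natCast.mul (isMultiplicative_tsumTerm m)) _
    (isMultiplicative_tsumClosedForm m)).2 fun p k hp => ?_
  rw [coe_zeta_mul_apply, Nat.sum_divisors_prime_pow hp, sum_range_tsumTerm_prime_pow hp hm,
    tsumClosedForm_prime_pow hp hm]

theorem ramanujanSum_gcd_of_dvd {u c : ℕ} (hu : u ∣ c) (m : ℕ) :
    ramanujanSum u (Nat.gcd m c) = ramanujanSum u m := by
  rw [ramanujanSum, ramanujanSum, Nat.gcd_comm m, ← Nat.gcd_assoc, Nat.gcd_eq_left hu]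

theorem Tsum_gcd_gcd (m n c : ℕ) : Tsum (Nat.gcd m c) (Nat.gcd n c) c = Tsum m n c :=
  sum_congr rfl fun u hu => by
    rw [ramanujanSum_gcd_of_dvd (Nat.dvd_of_mem_divisors hu),
      ramanujanSum_gcd_of_dvd (Nat.dvd_of_mem_divisors hu)]

theorem Tsum_eq_of_gcd_eq_general
    (m n c : ℕ) (hc : 0 < c)
    (h : Nat.gcd m c = Nat.gcd n c) :
    Tsum m n c = (Nat.gcd m c : ℝ) *
      ∏ p ∈ (c / Nat.gcd m c).primeFactors, (p : ℝ) / ((p : ℝ) - 1) := by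
  have hg : Nat.gcd m c ≠ 0 := Nat.gcd_ne_zero_right hc.ne'
  rw [← Tsum_gcd_gcd, ← h, Tsum_self_eq_zeta_mul_tsumTerm, zeta_mul_tsumTerm_eq_tsumClosedForm hg,
    tsumClosedForm_apply _ hc.ne', Nat.gcd_gcd_self_left_right]

theorem Tsum_eq_of_gcd_eq
    (m n c : ℕ) (hm : 0 < m) (hn : 0 < n) (hc : 0 < c)
    (h : Nat.gcd m c = Nat.gcd n c) :
    Tsum m n c = (Nat.gcd m c : ℝ) *
      ∏ p ∈ (c / Nat.gcd m c).primeFactors, (p : ℝ) / ((p : ℝ) - 1) :=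
  Tsum_eq_of_gcd_eq_general m n c hc h
end

section
/- Let p be a prime, k a positive integer, and m, n positive integers; write a = v_p(m) and b = v_p(n) for the p-adic valuations of m and n. Then: T(m,n;p^k) = p^k if k ≤ min(a,b); T(m,n;p^k) = p^a·p/(p−1) if a = b < k; and T(m,n;p^k) = 0 if min(a,b) < k and a ≠ b. -/
/-!
For a prime power, `c_{p^j}(n)` is `φ(p^j)` when `p^j ∣ n`, equals `-p^a` for `j = a + 1` where
`a = v_p(n)`, and vanishes for larger `j`. Take `a = v_p(m) ≤ v_p(n)` by symmetry. In
`T(m,n;p^k)` the divisors `p^i` with `i ≤ a` contribute `∑ φ(p^i) = p^a`, those with `i > a + 1`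
nothing, and `i = a + 1` contributes `-p^a c_{p^{a+1}}(n) / φ(p^{a+1})`: this cancels `p^a` when
`p^{a+1} ∣ n`, and adds `p^a / (p - 1)` when `v_p(n) = a`.
-/

open ArithmeticFunction

theorem ramanujanSum_of_dvd {q n : ℕ} (h : q ∣ n) : ramanujanSum q n = q.totient := by
  rcases q.eq_zero_or_pos with rfl | hq
  · simp [ramanujanSum]
  have inversion := (sum_eq_iff_sum_mul_moebius_eq (f := fun d => (d.totient : ℤ))
    (g := fun d => (d : ℤ))).1 (fun n _ => by exact_mod_cast Nat.sum_totient n) q hq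
  rw [ramanujanSum, Nat.gcd_eq_left h, ← inversion]
  exact (Nat.sum_divisorsAntidiagonal' fun a b => (moebius a : ℤ) * b).symm

theorem gcd_prime_pow_eq_pow_min {p : ℕ} (hp : p.Prime) (j : ℕ) {n : ℕ} (hn : n ≠ 0) :
    Nat.gcd (p ^ j) n = p ^ min j (padicValNat p n) := by
  obtain ⟨i, hij, hi⟩ := (Nat.dvd_prime_pow hp).1 (Nat.gcd_dvd_left (p ^ j) n)
  have hin : i ≤ padicValNat p n :=
    (padicValNat_dvd_iff_le_of_ne_one hp.ne_one hn).1 (hi ▸ Nat.gcd_dvd_right _ _)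
  refine Nat.dvd_antisymm (hi ▸ pow_dvd_pow p (le_min hij hin)) (Nat.dvd_gcd
    (pow_dvd_pow p (min_le_left _ _))
    ((padicValNat_dvd_iff_le_of_ne_one hp.ne_one hn).2 (min_le_right _ _)))

/-- Here `gcd (p ^ j) n = p ^ a` with `a = v_p n`, and among its divisors `p ^ i` only `i = a`
can make `μ (p ^ (j - i))` nonzero. -/
theorem ramanujanSum_prime_pow_of_lt_s13 {p j n : ℕ} (hp : p.Prime) (hn : n ≠ 0)
    (h : padicValNat p n < j) :
    ramanujanSum (p ^ j) n =
      if j = padicValNat p n + 1 then -(p : ℤ) ^ padicValNat p n else 0 := by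
  set a := padicValNat p n
  rw [ramanujanSum, gcd_prime_pow_eq_pow_min hp j hn, min_eq_right h.le,
    Nat.sum_divisors_prime_pow hp, Finset.sum_eq_single a]
  · rw [Nat.pow_div h.le hp.pos, moebius_apply_prime_pow hp (by omega),
      if_congr (show j - a = 1 ↔ j = a + 1 by omega) rfl rfl]
    split_ifs <;> simp
  · intro i hi hia
    have : i < a := by have := Finset.mem_range.1 hi; omega
    rw [Nat.pow_div (by omega) hp.pos, moebius_apply_prime_pow hp (by omega), if_neg (by omega),
      zero_mul]
  · simp

theorem Tsum_comm (m n c : ℕ) : Tsum m n c = Tsum n m c :=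
  Finset.sum_congr rfl fun _ _ => by ring

theorem Tsum_of_dvd {m n c : ℕ} (hm : c ∣ m) (hn : c ∣ n) : Tsum m n c = c := by
  have hc : (c : ℝ) = ∑ u ∈ c.divisors, (u.totient : ℝ) := by
    exact_mod_cast (Nat.sum_totient c).symm
  rw [Tsum, hc]
  refine Finset.sum_congr rfl fun u hu => ?_
  have hum : u ∣ c := Nat.dvd_of_mem_divisors hu
  have hφ : (u.totient : ℝ) ≠ 0 := by
    exact_mod_cast (Nat.totient_pos.2 (Nat.pos_of_mem_divisors hu)).ne'
  rw [ramanujanSum_of_dvd (hum.trans hm), ramanujanSum_of_dvd (hum.trans hn), Int.cast_natCast]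
  field_simp

theorem Tsum_prime_pow_succ {p : ℕ} (hp : p.Prime) (m n k : ℕ) :
    Tsum m n (p ^ (k + 1)) = Tsum m n (p ^ k) + ((p ^ (k + 1)).totient : ℝ)⁻¹ *
      ramanujanSum (p ^ (k + 1)) m * ramanujanSum (p ^ (k + 1)) n := by
  simp only [Tsum, Nat.sum_divisors_prime_pow hp, Finset.sum_range_succ]

theorem Tsum_prime_pow_eq_of_lt {p m k : ℕ} (hp : p.Prime) (hm : m ≠ 0) (n : ℕ)
    (hk : padicValNat p m < k) :
    Tsum m n (p ^ k) = Tsum m n (p ^ (padicValNat p m + 1)) := by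
  induction k, hk using Nat.le_induction with
  | base => rfl
  | succ k hk ih =>
    rw [Tsum_prime_pow_succ hp, ramanujanSum_prime_pow_of_lt_s13 hp hm (by omega), if_neg (by omega),
      ih]
    simp

theorem Tsum_prime_pow_of_lt {p m n k : ℕ} (hp : p.Prime) (hm : m ≠ 0) (hn : n ≠ 0)
    (hab : padicValNat p m ≤ padicValNat p n) (hk : padicValNat p m < k) :
    Tsum m n (p ^ k) = (p : ℝ) ^ padicValNat p m -
      (p : ℝ) ^ padicValNat p m * ((p ^ (padicValNat p m + 1)).totient : ℝ)⁻¹ *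
        ramanujanSum (p ^ (padicValNat p m + 1)) n := by
  have hdvd : p ^ padicValNat p m ∣ n := (padicValNat_dvd_iff_le_of_ne_one hp.ne_one hn).2 hab
  rw [Tsum_prime_pow_eq_of_lt hp hm n hk, Tsum_prime_pow_succ hp,
    Tsum_of_dvd pow_padicValNat_dvd hdvd, ramanujanSum_prime_pow_of_lt_s13 hp hm (by omega),
    if_pos rfl]
  push_cast
  ring

theorem Tsum_prime_pow_of_eq {p m n k : ℕ} (hp : p.Prime) (hm : m ≠ 0) (hn : n ≠ 0)
    (hab : padicValNat p m = padicValNat p n) (hk : padicValNat p m < k) :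
    Tsum m n (p ^ k) = (p : ℝ) ^ padicValNat p m * ((p : ℝ) / ((p : ℝ) - 1)) := by
  have hp1 : (p : ℝ) - 1 ≠ 0 := sub_ne_zero.2 (by exact_mod_cast hp.ne_one)
  have hp0 : (p : ℝ) ≠ 0 := by exact_mod_cast hp.ne_zero
  rw [Tsum_prime_pow_of_lt hp hm hn hab.le hk, ramanujanSum_prime_pow_of_lt_s13 hp hn (by omega),
    if_pos (by rw [hab]), Nat.totient_prime_pow_succ hp, ← hab]
  push_cast [Nat.cast_sub hp.one_le]
  field_simp
  ring

theorem Tsum_prime_pow_eq_zero {p m n k : ℕ} (hp : p.Prime) (hm : m ≠ 0) (hn : n ≠ 0)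
    (hab : padicValNat p m < padicValNat p n) (hk : padicValNat p m < k) :
    Tsum m n (p ^ k) = 0 := by
  have hdvd : p ^ (padicValNat p m + 1) ∣ n :=
    (padicValNat_dvd_iff_le_of_ne_one hp.ne_one hn).2 hab
  have hφ : ((p ^ (padicValNat p m + 1)).totient : ℝ) ≠ 0 := by
    exact_mod_cast (Nat.totient_pos.2 (pow_pos hp.pos _)).ne'
  rw [Tsum_prime_pow_of_lt hp hm hn hab.le hk, ramanujanSum_of_dvd hdvd, Int.cast_natCast,
    mul_assoc, inv_mul_cancel₀ hφ, mul_one, sub_self]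

theorem Tsum_prime_pow_general
    (p : ℕ) (hp : p.Prime) (k : ℕ)
    (m n : ℕ) (hm : 0 < m) (hn : 0 < n) :
    (k ≤ min (padicValNat p m) (padicValNat p n) → Tsum m n (p ^ k) = (p : ℝ) ^ k) ∧
      (padicValNat p m = padicValNat p n → padicValNat p m < k →
        Tsum m n (p ^ k) = (p : ℝ) ^ (padicValNat p m) * ((p : ℝ) / ((p : ℝ) - 1))) ∧
      (min (padicValNat p m) (padicValNat p n) < k →
        padicValNat p m ≠ padicValNat p n → Tsum m n (p ^ k) = 0) := by
  refine ⟨fun hk => ?_, Tsum_prime_pow_of_eq hp hm.ne' hn.ne', fun hk hab => ?_⟩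
  · rw [le_min_iff, ← padicValNat_dvd_iff_le_of_ne_one hp.ne_one hm.ne',
      ← padicValNat_dvd_iff_le_of_ne_one hp.ne_one hn.ne'] at hk
    exact_mod_cast Tsum_of_dvd hk.1 hk.2
  · rcases hab.lt_or_gt with hab | hab
    · exact Tsum_prime_pow_eq_zero hp hm.ne' hn.ne' hab (by omega)
    · rw [Tsum_comm]
      exact Tsum_prime_pow_eq_zero hp hn.ne' hm.ne' hab (by omega)

theorem Tsum_prime_pow
    (p : ℕ) (hp : p.Prime) (k : ℕ) (hk : 0 < k)
    (m n : ℕ) (hm : 0 < m) (hn : 0 < n) :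
    (k ≤ min (padicValNat p m) (padicValNat p n) → Tsum m n (p ^ k) = (p : ℝ) ^ k) ∧
      (padicValNat p m = padicValNat p n → padicValNat p m < k →
        Tsum m n (p ^ k) = (p : ℝ) ^ (padicValNat p m) * ((p : ℝ) / ((p : ℝ) - 1))) ∧
      (min (padicValNat p m) (padicValNat p n) < k →
        padicValNat p m ≠ padicValNat p n → Tsum m n (p ^ k) = 0) :=
  Tsum_prime_pow_general p hp k m n hm hn
end
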